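/- arXiv:1705.06232 — 2 statements merged into one kernel-verified Lean document; each statement's English description precedes it below -/
import Mathlib

section
/- Every torsion-free virtually cyclic group is either trivial or infinite cyclic. -/
/-!
Let `⟨b⟩` be the normal core of the cyclic subgroup, of finite index `m`. Conjugation by `t`
acts on `⟨b⟩` as `b ↦ b ^ k` and fixes `t ^ m ∈ ⟨b⟩`, so without torsion `k = 1` and `⟨b⟩` is
central. For a central subgroup of finite index `m` the transfer is `g ↦ g ^ m`; without torsion
it is injective, so `G` embeds into `⟨b⟩` and is cyclic, hence trivial or infinite cyclic.
-/

open Subgroup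

section

variable {G : Type*} [Group G]

theorem eq_one_of_pow_eq_one (hG : ∀ g : G, g ≠ 1 → ¬IsOfFinOrder g) {g : G} {n : ℕ}
    (hn : n ≠ 0) (h : g ^ n = 1) : g = 1 :=
  not_not.mp fun hg => hG g hg (isOfFinOrder_iff_pow_eq_one.mpr ⟨n, Nat.pos_of_ne_zero hn, h⟩)

namespace Subgroup

variable {N : Subgroup G}

theorem isMulCommutative_of_le_center (hN : N ≤ center G) : IsMulCommutative N :=
  ⟨⟨fun a b => Subtype.ext (mem_center_iff.mp (hN b.2) a)⟩⟩

theorem conj_eq_self_of_conj_mem_of_le_center (hN : N ≤ center G) {x g : G}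
    (h : g⁻¹ * x * g ∈ N) : g⁻¹ * x * g = x := by
  have hc : g * (g⁻¹ * x * g) = g⁻¹ * x * g * g := mem_center_iff.mp (hN h) g
  rw [show g * (g⁻¹ * x * g) = x * g by group] at hc
  exact mul_right_cancel hc.symm

open scoped IsMulCommutative in
noncomputable def powIndexHom (N : Subgroup G) [N.FiniteIndex] (hN : N ≤ center G) : G →* N :=
  have := isMulCommutative_of_le_center hN
  MonoidHom.transfer (MonoidHom.id N)

open scoped IsMulCommutative in
theorem powIndexHom_apply [N.FiniteIndex] (hN : N ≤ center G) (g : G) :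
    (N.powIndexHom hN g : G) = g ^ N.index := by
  have := isMulCommutative_of_le_center hN
  unfold powIndexHom
  rw [MonoidHom.transfer_eq_pow _ g fun _ _ h => conj_eq_self_of_conj_mem_of_le_center hN h]
  rfl

end Subgroup

theorem isCyclic_of_le_center (hG : ∀ g : G, g ≠ 1 → ¬IsOfFinOrder g) {N : Subgroup G}
    [IsCyclic N] [N.FiniteIndex] (hN : N ≤ center G) : IsCyclic G := by
  refine isCyclic_of_injective (N.powIndexHom hN) ((injective_iff_map_eq_one _).mpr fun g hg => ?_)
  refine eq_one_of_pow_eq_one hG (FiniteIndex.index_ne_zero (H := N)) ?_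
  rw [← powIndexHom_apply hN, hg, OneMemClass.coe_one]

theorem mem_center_of_normal_zpowers (hG : ∀ g : G, g ≠ 1 → ¬IsOfFinOrder g) {b : G}
    [(zpowers b).Normal] [(zpowers b).FiniteIndex] : b ∈ center G := by
  refine mem_center_iff.mpr fun t => ?_
  obtain ⟨k, hk⟩ : ∃ k : ℤ, b ^ k = t * b * t⁻¹ :=
    mem_zpowers_iff.mp (Normal.conj_mem inferInstance b (mem_zpowers b) t)
  obtain ⟨l, hl⟩ : ∃ l : ℤ, b ^ l = t ^ (zpowers b).index :=
    mem_zpowers_iff.mp (pow_index_mem _ t)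
  -- conjugation by `t` fixes `b ^ l = t ^ index` and also raises it to the power `k`
  have hkl : b ^ ((k - 1) * l) = 1 := by
    have : (t * b * t⁻¹) ^ l = b ^ l := by rw [conj_zpow, hl]; group
    rw [← hk, ← zpow_mul] at this
    rw [sub_mul, one_mul, zpow_sub, this, mul_inv_cancel]
  by_cases hb : b = 1
  · rw [hb, one_mul, mul_one]
  have hkl' : (k - 1) * l = 0 :=
    not_not.mp fun h => hG b hb (isOfFinOrder_iff_zpow_eq_one.mpr ⟨_, h, hkl⟩)
  rcases mul_eq_zero.mp hkl' with hk1 | hl0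
  · rw [sub_eq_zero.mp hk1, zpow_one] at hk
    calc t * b = t * b * t⁻¹ * t := by group
      _ = b * t := by rw [← hk]
  · rw [hl0, zpow_zero] at hl
    rw [eq_one_of_pow_eq_one hG (FiniteIndex.index_ne_zero (H := zpowers b)) hl.symm, one_mul,
      mul_one]

theorem subsingleton_or_nonempty_mulEquiv_int_of_isCyclic
    (hG : ∀ g : G, g ≠ 1 → ¬IsOfFinOrder g) [IsCyclic G] :
    Subsingleton G ∨ Nonempty (G ≃* Multiplicative ℤ) := by
  rcases finite_or_infinite G with hfin | hinf
  · have eq_one (g : G) : g = 1 := not_not.mp fun hg => hG g hg (isOfFinOrder_of_finite g)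
    exact .inl ⟨fun a b => by rw [eq_one a, eq_one b]⟩
  · exact .inr ⟨intCyclicMulEquiv.symm⟩

end

/-- Every torsion-free virtually cyclic group is either trivial or infinite cyclic. -/
theorem torsionFree_virtuallyCyclic_trivial_or_infinite_cyclic
    {G : Type*} [Group G] (hTF : ∀ g : G, g ≠ 1 → ¬IsOfFinOrder g)
    (H : Subgroup G) (hcyc : IsCyclic H) (hfi : H.FiniteIndex) :
    Subsingleton G ∨ Nonempty (G ≃* Multiplicative ℤ) := by
  obtain ⟨b, hb⟩ := H.normalCore.isCyclic_iff_exists_zpowers_eq_top.mp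
    (isCyclic_of_le H.normalCore_le)
  have : (zpowers b).Normal := hb ▸ H.normalCore_normal
  have : (zpowers b).FiniteIndex := hb ▸ inferInstance
  have : IsCyclic G :=
    isCyclic_of_le_center hTF (zpowers_le.mpr (mem_center_of_normal_zpowers hTF (b := b)))
  exact subsingleton_or_nonempty_mulEquiv_int_of_isCyclic hTF
end

section
/- Let φ and ψ be automorphisms of a group N that differ by an inner automorphism, i.e., ψ = c_a ∘ φ for some a ∈ N, where c_a(x) = a x a⁻¹. Suppose there is n > 0 and g ∈ N with φ(g) = g and φⁿ = c_{g⁻¹}. Then there exist m > 0 and h ∈ N with ψ(h) = h and ψᵐ = c_{h⁻¹}. -/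
private lemma conj_comm_aut {N : Type*} [Group N] (φ : MulAut N) (b : N) :
    φ * MulAut.conj b = MulAut.conj (φ b) * φ := by
  ext x
  simp [mul_assoc]

private lemma aux_fixed {N : Type*} [Group N] (ψ : MulAut N) (n : ℕ) (hn : 0 < n) (h : N)
    (hpsi : ψ ^ n = MulAut.conj h⁻¹) :
    ∃ m : ℕ, 0 < m ∧ ∃ H : N, ψ H = H ∧ ψ ^ m = MulAut.conj H⁻¹ := by
  have hconj : MulAut.conj (ψ h⁻¹) = MulAut.conj h⁻¹ := by
    have h1 := conj_comm_aut ψ h⁻¹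
    have h2 : ψ * ψ ^ n = ψ ^ n * ψ := by rw [← pow_succ, ← pow_succ']
    rw [hpsi] at h2
    exact mul_right_cancel (h1.symm.trans h2)
  have hconj' : MulAut.conj (ψ h) = MulAut.conj h := by
    have h1 : MulAut.conj ((ψ h)⁻¹) = MulAut.conj h⁻¹ := by rw [← map_inv ψ]; exact hconj
    rw [map_inv, map_inv] at h1
    exact inv_injective h1
  have e : ∀ y : N, ψ h * y * (ψ h)⁻¹ = h * y * h⁻¹ := by
    intro y
    have := congrArg (fun f : MulAut N => f y) hconj'
    simpa [MulAut.conj_apply] using this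
  have hz : ∀ y : N, (h⁻¹ * ψ h) * y = y * (h⁻¹ * ψ h) := by
    intro y
    calc h⁻¹ * ψ h * y = h⁻¹ * (ψ h * y * (ψ h)⁻¹) * ψ h := by group
      _ = h⁻¹ * (h * y * h⁻¹) * ψ h := by rw [e y]
      _ = y * (h⁻¹ * ψ h) := by group
  -- image of central is central
  have hmapc : ∀ c : N, (∀ y, c * y = y * c) → ∀ y, ψ c * y = y * ψ c := by
    intro c hc y
    have h1 := hc (ψ⁻¹ y)
    have h2 := congrArg ψ h1
    rw [map_mul, map_mul] at h2
    simpa using h2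
  -- ψ^k h = h * central
  have hcent : ∀ k : ℕ, ∃ c : N, (∀ y, c * y = y * c) ∧ (ψ ^ k) h = h * c := by
    intro k
    induction k with
    | zero => exact ⟨1, by simp, by simp⟩
    | succ k ih =>
      obtain ⟨c, hc, hck⟩ := ih
      refine ⟨(h⁻¹ * ψ h) * ψ c, ?_, ?_⟩
      · intro y
        calc (h⁻¹ * ψ h) * ψ c * y = (h⁻¹ * ψ h) * (y * ψ c) := by
              rw [mul_assoc, hmapc c hc y]
          _ = y * ((h⁻¹ * ψ h) * ψ c) := by rw [← mul_assoc, hz, mul_assoc]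
      · rw [pow_succ']
        show ψ ((ψ ^ k) h) = _
        rw [hck, map_mul]
        calc ψ h * ψ c = h * (h⁻¹ * ψ h) * ψ c := by group
          _ = h * ((h⁻¹ * ψ h) * ψ c) := by rw [mul_assoc]
  set f : ℕ → N := fun k => (ψ ^ k) h with hf
  set P : ℕ → N := fun j => ((List.range j).map f).prod with hP
  have hPsucc : ∀ j, P (j + 1) = P j * f j := by
    intro j
    simp [hP, List.range_succ]
  have hψnh : f n = h := by
    simp only [hf, hpsi]; simp [MulAut.conj_apply]
  -- each f k commutes with h
  have hfh : ∀ k, f k * h = h * f k := by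
    intro k
    obtain ⟨c, hc, hck⟩ := hcent k
    simp only [hf, hck]
    rw [mul_assoc, hc h, ← mul_assoc]
  -- P j commutes with h
  have hPh : ∀ j, P j * h = h * P j := by
    intro j
    induction j with
    | zero => simp [hP]
    | succ j ih =>
      rw [hPsucc, mul_assoc, hfh, ← mul_assoc, ih, mul_assoc]
  obtain ⟨m, rfl⟩ : ∃ m, n = m + 1 := ⟨n - 1, (Nat.succ_pred_eq_of_pos hn).symm⟩
  -- ψ fixes P n
  have hψprod : ∀ l : List N, ψ l.prod = (l.map (⇑ψ)).prod := by
    intro l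
    induction l with
    | nil => simp
    | cons x xs ih => simp [ih]
  have hstep : ∀ k, ψ (f k) = f (k + 1) := by
    intro k
    simp only [hf, pow_succ']
    rfl
  have hψP : ∀ j, ψ (P j) = ((List.range j).map (fun k => f (k + 1))).prod := by
    intro j
    simp only [hP]
    rw [hψprod, List.map_map]
    congr 1
    apply List.map_congr_left
    intro k _
    exact hstep k
  have hfix : ψ (P (m + 1)) = P (m + 1) := by
    rw [hψP]
    have lhs : ((List.range (m + 1)).map (fun k => f (k + 1))).prod
        = ((List.range m).map (fun k => f (k + 1))).prod * f (m + 1) := by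
      simp [List.range_succ]
    have rhs : P (m + 1) = h * ((List.range m).map (fun k => f (k + 1))).prod := by
      simp only [hP]
      rw [List.range_succ_eq_map]
      simp only [List.map_cons, List.prod_cons, List.map_map]
      congr 1
    rw [lhs, hψnh, rhs]
    -- need Q * h = h * Q where Q = prod
    have hQ : ((List.range m).map (fun k => f (k + 1))).prod * h
        = h * ((List.range m).map (fun k => f (k + 1))).prod := by
      have : ∀ l : List ℕ, (l.map (fun k => f (k + 1))).prod * h
          = h * (l.map (fun k => f (k + 1))).prod := by
        intro l
        induction l with
        | nil => simp
        | cons x xs ih =>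
          simp only [List.map_cons, List.prod_cons]
          rw [mul_assoc, ih, ← mul_assoc, hfh, mul_assoc]
      exact this _
    exact hQ
  -- P j = h ^ j * central
  have hform : ∀ j : ℕ, ∃ Z : N, (∀ y, Z * y = y * Z) ∧ P j = h ^ j * Z := by
    intro j
    induction j with
    | zero => exact ⟨1, by simp, by simp [hP]⟩
    | succ j ih =>
      obtain ⟨Z, hZ, hZj⟩ := ih
      obtain ⟨c, hc, hcj⟩ := hcent j
      refine ⟨Z * c, ?_, ?_⟩
      · intro y
        calc Z * c * y = Z * (y * c) := by rw [mul_assoc, hc]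
          _ = y * (Z * c) := by rw [← mul_assoc, hZ, mul_assoc]
      · have hfj : f j = h * c := hcj
        rw [hPsucc, hZj, hfj]
        calc h ^ j * Z * (h * c) = h ^ j * (Z * h) * c := by group
          _ = h ^ j * (h * Z) * c := by rw [hZ]
          _ = h ^ (j + 1) * (Z * c) := by rw [pow_succ]; group
  obtain ⟨Z, hZ, hZn⟩ := hform (m + 1)
  refine ⟨(m + 1) * (m + 1), Nat.mul_pos hn hn, P (m + 1), hfix, ?_⟩
  have hconjZ : MulAut.conj Z⁻¹ = 1 := by
    ext y
    show Z⁻¹ * y * Z⁻¹⁻¹ = y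
    calc Z⁻¹ * y * Z⁻¹⁻¹ = Z⁻¹ * (y * Z) := by rw [inv_inv, mul_assoc]
      _ = Z⁻¹ * (Z * y) := by rw [← hZ]
      _ = y := by group
  calc ψ ^ ((m + 1) * (m + 1)) = (ψ ^ (m + 1)) ^ (m + 1) := by rw [pow_mul]
    _ = MulAut.conj (h⁻¹ ^ (m + 1)) := by rw [hpsi, map_pow]
    _ = MulAut.conj (P (m + 1))⁻¹ := by
        rw [hZn, mul_inv_rev, map_mul, hconjZ, inv_pow]
        simp

/-- If automorphisms `φ, ψ` of `N` differ by an inner automorphism, and some positive power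
of `φ` is conjugation by the inverse of a `φ`-fixed element, then the same holds for `ψ`. -/
theorem conjugation_power_condition_independent_of_representative
    {N : Type*} [Group N] (φ ψ : MulAut N) (a : N)
    (hψ : ψ = MulAut.conj a * φ)
    (n : ℕ) (hn : 0 < n) (g : N) (hg : φ g = g) (hφn : φ ^ n = MulAut.conj g⁻¹) :
    ∃ m : ℕ, 0 < m ∧ ∃ h : N, ψ h = h ∧ ψ ^ m = MulAut.conj h⁻¹ := by
  have key : ∀ k : ℕ, ∃ b : N, ψ ^ k = MulAut.conj b * φ ^ k := by
    intro k
    induction k with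
    | zero => exact ⟨1, by simp⟩
    | succ k ih =>
      obtain ⟨b, hb⟩ := ih
      refine ⟨a * φ b, ?_⟩
      rw [pow_succ', hb, hψ, pow_succ', map_mul]
      calc MulAut.conj a * φ * (MulAut.conj b * φ ^ k)
          = MulAut.conj a * (φ * MulAut.conj b) * φ ^ k := by group
        _ = MulAut.conj a * (MulAut.conj (φ b) * φ) * φ ^ k := by rw [conj_comm_aut]
        _ = MulAut.conj a * MulAut.conj (φ b) * (φ * φ ^ k) := by group
  obtain ⟨b, hb⟩ := key n
  rw [hφn, ← map_mul] at hb
  have : ψ ^ n = MulAut.conj ((b * g⁻¹)⁻¹)⁻¹ := by rw [hb]; simp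
  exact aux_fixed ψ n hn ((b * g⁻¹)⁻¹) this
end
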